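/- Let r and s be coprime integers with 2 ≤ r < s, g = (r−1)(s−1)/2, N the increasing enumeration of the numerical semigroup S generated by r and s, and Λ_i = g − N(i−1) + (i−1) for i = 1, …, g. Then for each i = 1, …, g one has Λ_i + g − i = 2g − N(i−1) − 1, and the set {Λ_i + g − i : 1 ≤ i ≤ g} (the first-column hook lengths of the Young diagram Λ) is exactly the set of gaps of S. -/
import Mathlib


/-- Membership in the numerical semigroup generated by `r` and `s`. -/
def inSg (r s n : ℕ) : Prop := ∃ a b : ℕ, n = a * r + b * s

lemma exists_rep (r s : ℕ) (hs : 0 < s) (hco : Nat.Coprime r s) (n : ℕ) :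
    ∃ (a : ℕ) (b : ℤ), a < s ∧ (n : ℤ) = a * r + b * s := by
  have h1 : IsCoprime (r : ℤ) (s : ℤ) := by
    rw [Int.isCoprime_iff_gcd_eq_one]; exact_mod_cast hco
  obtain ⟨u, v, huv⟩ := h1
  have hs' : (0:ℤ) < s := by exact_mod_cast hs
  set a : ℤ := (n * u) % s with ha
  have ha0 : 0 ≤ a := Int.emod_nonneg _ (by omega)
  have has : a < s := Int.emod_lt_of_pos _ hs'
  set q : ℤ := (n * u) / s with hq
  have haq : a = n * u - s * q := by rw [ha, hq, Int.emod_def]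
  refine ⟨a.toNat, n * v + q * r, ?_, ?_⟩
  · have := has
    omega
  · have h2 : (a.toNat : ℤ) = a := Int.toNat_of_nonneg ha0
    rw [h2, haq]
    linear_combination (-(n:ℤ)) * huv

lemma mem_iff (r s : ℕ) (hs : 0 < s) (hco : Nat.Coprime r s)
    (n a : ℕ) (b : ℤ) (has : a < s) (hrep : (n:ℤ) = a*r + b*s) :
    inSg r s n ↔ 0 ≤ b := by
  constructor
  · rintro ⟨a1, b1, rfl⟩
    have h : ((a1:ℤ) - a) * r = (b - b1) * s := by
      push_cast at hrep
      linear_combination hrep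
    have hcop : IsCoprime (s : ℤ) (r : ℤ) := by
      rw [Int.isCoprime_iff_gcd_eq_one, Int.gcd_comm]; exact_mod_cast hco
    have hsd : (s:ℤ) ∣ ((a1:ℤ) - a) := by
      apply hcop.dvd_of_dvd_mul_right
      exact ⟨b - b1, by linarith [h]⟩
    obtain ⟨k, hk⟩ := hsd
    have hk0 : 0 ≤ k := by
      by_contra hneg
      push_neg at hneg
      have : (a1:ℤ) = a + s * k := by linarith
      have h1 : (0:ℤ) ≤ a1 := by positivity
      have h2 : (s:ℤ) * k ≤ -s := by
        have : k ≤ -1 := by omega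
        nlinarith [show (0:ℤ) < s by exact_mod_cast hs]
      have h3 : (a:ℤ) < s := by exact_mod_cast has
      linarith
    have hb : b = b1 + k * r := by
      have hs0 : (s:ℤ) ≠ 0 := by exact_mod_cast hs.ne'
      have : (b - b1 - k * r) * s = 0 := by rw [hk] at h; linarith [h]
      have := mul_eq_zero.mp this
      rcases this with h' | h'
      · linarith
      · exact absurd h' hs0
    rw [hb]
    positivity
  · intro hb
    refine ⟨a, b.toNat, ?_⟩
    have h2 : (b.toNat : ℤ) = b := Int.toNat_of_nonneg hb
    have : (n:ℤ) = (a:ℤ)*r + (b.toNat:ℤ)*s := by rw [h2]; exact hrep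
    exact_mod_cast this

lemma rs_lower (r s : ℕ) (hr : 2 ≤ r) (hrs : r < s) : r + s ≤ r * s := by
  calc r + s ≤ s + s := by omega
  _ = 2 * s := by ring
  _ ≤ r * s := Nat.mul_le_mul_right s hr

lemma sym (r s : ℕ) (hr : 2 ≤ r) (hrs : r < s) (hco : Nat.Coprime r s) (n : ℕ)
    (hn : n ≤ r*s - r - s) : (inSg r s n ↔ ¬ inSg r s (r*s - r - s - n)) := by
  have hs : 0 < s := by omega
  have hle := rs_lower r s hr hrs
  obtain ⟨a, b, has, hrep⟩ := exists_rep r s hs hco n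
  have key1 := mem_iff r s hs hco n a b has hrep
  have hcast : ((r*s - r - s - n : ℕ) : ℤ) = (r:ℤ)*s - r - s - n := by
    have h1 : r*s - r - s - n = r*s - (r + s + n) := by omega
    rw [h1]
    have h2 : r + s + n ≤ r * s := by omega
    push_cast [Nat.cast_sub h2]
    ring
  have hrep2 : ((r*s - r - s - n : ℕ) : ℤ) = ((s - 1 - a : ℕ):ℤ)*r + (-1-b)*s := by
    rw [hcast]
    have h3 : ((s - 1 - a : ℕ):ℤ) = (s:ℤ) - 1 - a := by
      have : a ≤ s - 1 := by omega
      push_cast [Nat.cast_sub this, Nat.cast_sub (show 1 ≤ s by omega)]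
      ring
    rw [h3, hrep]
    ring
  have key2 := mem_iff r s hs hco (r*s - r - s - n) (s - 1 - a) (-1-b) (by omega) hrep2
  rw [key1, key2]
  omega

lemma large (r s : ℕ) (hr : 2 ≤ r) (hrs : r < s) (hco : Nat.Coprime r s) (n : ℕ)
    (hn : r*s - r - s < n) : inSg r s n := by
  have hs : 0 < s := by omega
  have hle := rs_lower r s hr hrs
  obtain ⟨a, b, has, hrep⟩ := exists_rep r s hs hco n
  rw [mem_iff r s hs hco n a b has hrep]
  by_contra hb
  push_neg at hb
  have hb1 : b ≤ -1 := by omega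
  have h1 : (n:ℤ) ≤ ((s:ℤ)-1)*r - s := by
    have ha : (a:ℤ) ≤ (s:ℤ) - 1 := by
      have h0 : (a:ℤ) < s := by exact_mod_cast has
      omega
    have h2 : (a:ℤ)*r ≤ ((s:ℤ)-1)*r := by
      apply mul_le_mul_of_nonneg_right ha (by positivity)
    have h3 : b*s ≤ -s := by nlinarith [show (0:ℤ) < s by exact_mod_cast hs]
    linarith [hrep]
  have h4 : ((r*s - r - s : ℕ):ℤ) = (r:ℤ)*s - r - s := by
    have h5 : r*s - r - s = r*s - (r + s) := by omega
    rw [h5, Nat.cast_sub hle]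
    push_cast; ring
  have h6 : ((r*s - r - s : ℕ):ℤ) < (n:ℤ) := by exact_mod_cast hn
  rw [h4] at h6
  nlinarith

/-- The Young diagram row lengths `Λ i = g - N(i-1) + (i-1)` attached to the
Weierstrass gap sequence. -/
def Lam (g : ℕ) (N : ℕ → ℕ) (i : ℕ) : ℕ := g + (i - 1) - N (i - 1)

/-- For `1 ≤ i ≤ g` one has `Λ_i + g - i = 2g - N(i-1) - 1`, and the set of
first-column hook lengths `{Λ_i + g - i}` is exactly the set of gaps of the
numerical semigroup. -/
theorem hook_lengths_are_gaps (r s g : ℕ) (N : ℕ → ℕ)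
    (hr : 2 ≤ r) (hrs : r < s) (hco : Nat.Coprime r s)
    (hg : 2 * g = (r - 1) * (s - 1))
    (hmono : StrictMono N)
    (hmem : ∀ n, inSg r s (N n))
    (hsurj : ∀ m, inSg r s m → ∃ n, N n = m) :
    (∀ i : ℕ, 1 ≤ i → i ≤ g → Lam g N i + g - i = 2 * g - N (i - 1) - 1) ∧
    {n : ℕ | ∃ i : ℕ, 1 ≤ i ∧ i ≤ g ∧ n = Lam g N i + g - i} =
      {n : ℕ | 0 < n ∧ ¬ inSg r s n} := by
  classical
  have hs : 0 < s := by omega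
  have hle := rs_lower r s hr hrs
  have hg1 : 1 ≤ g := by
    have h1 : 1 ≤ r - 1 := by omega
    have h2 : 2 ≤ s - 1 := by omega
    have := Nat.mul_le_mul h1 h2
    omega
  have hF : r * s - r - s = 2 * g - 1 := by
    have h1 : (2*(g:ℤ)) = ((r:ℤ) - 1) * ((s:ℤ) - 1) := by
      have h := hg
      zify [show 1 ≤ r by omega, show 1 ≤ s by omega] at h
      exact_mod_cast h
    have h2 : ((r*s : ℕ):ℤ) = 2*(g:ℤ) - 1 + r + s := by
      push_cast
      linear_combination -h1
    omega
  have hsym : ∀ n : ℕ, n ≤ 2*g - 1 → (inSg r s n ↔ ¬ inSg r s (2*g - 1 - n)) := by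
    intro n hn
    have h := sym r s hr hrs hco n (by omega)
    rwa [hF] at h
  have hlarge : ∀ n : ℕ, 2*g ≤ n → inSg r s n := by
    intro n hn
    exact large r s hr hrs hco n (by omega)
  have hFnot : ¬ inSg r s (2*g - 1) := by
    have h0 : inSg r s 0 := ⟨0, 0, by ring⟩
    have h := (hsym 0 (by omega)).mp h0
    simpa using h
  -- cardinality of semigroup elements below 2g is g
  have hTcard : ((Finset.range (2*g)).filter (fun n => inSg r s n)).card = g := by
    have hsum : ((Finset.range (2*g)).filter (fun n => inSg r s n)).card
        + ((Finset.range (2*g)).filter (fun n => ¬ inSg r s n)).card = 2*g := by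
      rw [Finset.card_filter_add_card_filter_not, Finset.card_range]
    have hbij : ((Finset.range (2*g)).filter (fun n => inSg r s n)).card
        = ((Finset.range (2*g)).filter (fun n => ¬ inSg r s n)).card := by
      apply Finset.card_bij (fun n _ => 2*g - 1 - n)
      · intro a ha
        simp only [Finset.mem_filter, Finset.mem_range] at ha ⊢
        obtain ⟨ha1, ha2⟩ := ha
        exact ⟨by omega, (hsym a (by omega)).mp ha2⟩
      · intro a ha b hb h
        simp only [Finset.mem_filter, Finset.mem_range] at ha hb
        omega
      · intro m hm
        simp only [Finset.mem_filter, Finset.mem_range] at hm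
        obtain ⟨hm1, hm2⟩ := hm
        refine ⟨2*g - 1 - m, ?_, by omega⟩
        simp only [Finset.mem_filter, Finset.mem_range]
        refine ⟨by omega, ?_⟩
        have e : 2*g - 1 - (2*g - 1 - m) = m := by omega
        have h := hsym (2*g - 1 - m) (by omega)
        rw [e] at h
        exact h.mpr hm2
    omega
  have himage : ∀ j : ℕ, (Finset.range (N j)).filter (fun n => inSg r s n)
      = (Finset.range j).image N := by
    intro j
    ext m
    simp only [Finset.mem_filter, Finset.mem_range, Finset.mem_image]
    constructor
    · rintro ⟨hm1, hm2⟩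
      obtain ⟨k, hk⟩ := hsurj m hm2
      refine ⟨k, ?_, hk⟩
      rw [← hk] at hm1
      exact hmono.lt_iff_lt.mp hm1
    · rintro ⟨k, hk1, rfl⟩
      exact ⟨hmono hk1, hmem k⟩
  have hcount : ∀ j : ℕ, ((Finset.range (N j)).filter (fun n => inSg r s n)).card = j := by
    intro j
    rw [himage, Finset.card_image_of_injective _ hmono.injective, Finset.card_range]
  have h1 : ∀ j, j < g → N j < 2*g := by
    intro j hj
    by_contra hcon
    push_neg at hcon
    have hsub : (Finset.range (2*g)).filter (fun n => inSg r s n)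
        ⊆ (Finset.range (N j)).filter (fun n => inSg r s n) := by
      apply Finset.filter_subset_filter
      exact Finset.range_subset_range.mpr hcon
    have := Finset.card_le_card hsub
    rw [hTcard, hcount] at this
    omega
  have h2 : ∀ j, N j < 2*g → j < g := by
    intro j hj
    have hsub : (Finset.range (j+1)).image N ⊆ (Finset.range (2*g)).filter (fun n => inSg r s n) := by
      intro m hm
      simp only [Finset.mem_image, Finset.mem_range] at hm
      obtain ⟨k, hk1, rfl⟩ := hm
      simp only [Finset.mem_filter, Finset.mem_range]
      exact ⟨lt_of_le_of_lt (hmono.monotone (by omega : k ≤ j)) hj, hmem k⟩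
    have := Finset.card_le_card hsub
    rw [Finset.card_image_of_injective _ hmono.injective, Finset.card_range, hTcard] at this
    omega
  have h3 : ∀ j, j < g → N j ≤ g + j := by
    intro j hj
    have hNj := h1 j hj
    have hsubn : (Finset.range (N j)).filter (fun n => ¬ inSg r s n)
        ⊆ (Finset.range (2*g)).filter (fun n => ¬ inSg r s n) := by
      apply Finset.filter_subset_filter
      exact Finset.range_subset_range.mpr (by omega)
    have hc1 : ((Finset.range (N j)).filter (fun n => inSg r s n)).card
        + ((Finset.range (N j)).filter (fun n => ¬ inSg r s n)).card = N j := by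
      rw [Finset.card_filter_add_card_filter_not, Finset.card_range]
    have hc2 : ((Finset.range (2*g)).filter (fun n => inSg r s n)).card
        + ((Finset.range (2*g)).filter (fun n => ¬ inSg r s n)).card = 2*g := by
      rw [Finset.card_filter_add_card_filter_not, Finset.card_range]
    have hcard := Finset.card_le_card hsubn
    have hj' := hcount j
    have hle' : j ≤ N j := hmono.le_apply
    omega
  have hne : ∀ j : ℕ, N j ≠ 2*g - 1 := by
    intro j hj
    exact hFnot (hj ▸ hmem j)
  have part1 : ∀ i : ℕ, 1 ≤ i → i ≤ g → Lam g N i + g - i = 2 * g - N (i - 1) - 1 := by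
    intro i hi1 hi2
    have hj : i - 1 < g := by omega
    have ha := h3 (i-1) hj
    have hb := h1 (i-1) hj
    unfold Lam
    omega
  refine ⟨part1, ?_⟩
  ext n
  simp only [Set.mem_setOf_eq]
  constructor
  · rintro ⟨i, hi1, hi2, rfl⟩
    have hj : i - 1 < g := by omega
    have hb3 := h3 (i-1) hj
    have hb1 := h1 (i-1) hj
    have hb4 := hne (i-1)
    rw [part1 i hi1 hi2]
    refine ⟨by omega, ?_⟩
    have h := (hsym (N (i-1)) (by omega)).mp (hmem (i-1))
    have e : 2*g - N (i-1) - 1 = 2*g - 1 - N (i-1) := by omega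
    rw [e]
    exact h
  · rintro ⟨hn0, hnot⟩
    have hn2g : n < 2*g := by
      by_contra hc
      push_neg at hc
      exact hnot (hlarge n hc)
    have hmem' : inSg r s (2*g - 1 - n) := by
      have h := hsym n (by omega)
      by_contra hc
      exact hnot (h.mpr hc)
    obtain ⟨j, hj⟩ := hsurj _ hmem'
    have hjg : j < g := h2 j (by rw [hj]; omega)
    refine ⟨j+1, by omega, by omega, ?_⟩
    have hb3 := h3 j hjg
    unfold Lam
    simp only [Nat.add_sub_cancel]
    omega
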